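/- arXiv:1307.6261 — 5 statements merged into one kernel-verified Lean document; each statement's English description precedes it below -/
import Mathlib

section
/- For intervals J and J' in a bipartite type A quiver Q, the rank of the matrix M_J evaluated at the indecomposable representation I_{J'} equals the ceiling of (#(J ∩ J'))/2, where #(J ∩ J') denotes the number of arrows in the intersection of the two intervals. -/
/-!
The arrows lying in both `J = [a, b]` and `J' = [a', b']` are those of `[L, R]` with
`L = max a a'` and `R = min b b'`, so up to transposition the matrix is the biadjacency matrix
of the path they form, with rows the vertices of parity opposite to `L`. Its nonzero rows are
`L + 1, L + 3, …`, at most `⌈(R + 1 - L) / 2⌉` of them; pairing row `L + 2i + 1` with column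
`L + 2i` (the two ends of the arrow `L + 2i`) gives an upper unitriangular square submatrix of
that size, so the rank is exactly `⌈(R + 1 - L) / 2⌉`.
-/

open Matrix

theorem Matrix.rank_eq_of_isUpperTriangular_submatrix {ι κ K : Type*} [Fintype ι] [Fintype κ]
    [Field K] (X : Matrix ι κ K) {m : ℕ} (r : Fin m → ι) (c : Fin m → κ)
    (hrows : ∀ u ∉ Set.range r, X u = 0) (htri : (X.submatrix r c).IsUpperTriangular)
    (hdiag : ∀ i, X (r i) (c i) ≠ 0) : X.rank = m := by
  classical
  refine le_antisymm ?_ ?_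
  · calc X.rank ≤ (Finset.univ.image r).card :=
          X.rank_le_card_of_support_subset _ fun u hu => by
            by_contra hr
            exact hu (hrows u (by simpa using hr))
      _ ≤ m := Finset.card_image_le.trans_eq (Finset.card_fin m)
  · have hdet : (X.submatrix r c).det ≠ 0 := by
      rw [det_of_isUpperTriangular htri]
      exact Finset.prod_ne_zero_iff.mpr fun i _ => hdiag i
    calc m = (X.submatrix r c).rank := by rw [rank_of_det_ne_zero hdet, Fintype.card_fin]
      _ ≤ X.rank := X.rank_submatrix_le r c

/-- Arrow `t` joins the vertices `t` and `t + 1`; it is indexed by its smaller endpoint. -/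
def pathBiadjacency (K : Type*) [Zero K] [One K] (N L R : ℕ) : Matrix (Fin N) (Fin N) K :=
  of fun u v => if (u : ℕ) % 2 ≠ L % 2 ∧ (v : ℕ) % 2 = L % 2 ∧
    ((u : ℕ) = v + 1 ∨ (v : ℕ) = u + 1) ∧ L ≤ min (u : ℕ) v ∧ min (u : ℕ) v ≤ R then 1 else 0

theorem rank_pathBiadjacency (K : Type*) [Field K] {N L R : ℕ} (hRN : R + 2 ≤ N) :
    (pathBiadjacency K N L R).rank = (R + 1 - L + 1) / 2 := by
  refine (pathBiadjacency K N L R).rank_eq_of_isUpperTriangular_submatrix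
    (fun i => ⟨L + 2 * i + 1, by omega⟩) (fun j => ⟨L + 2 * j, by omega⟩) ?_ ?_ ?_
  · intro u hu
    ext v
    rw [pathBiadjacency, of_apply, if_neg]
    · rfl
    rintro ⟨hu2, hv2, hadj, hL, hR⟩
    exact hu ⟨⟨((u : ℕ) - L - 1) / 2, by omega⟩, Fin.ext (by simp only; omega)⟩
  · intro i j hji
    have : (j : ℕ) < i := hji
    rw [submatrix_apply, pathBiadjacency, of_apply, if_neg (by simp only; omega)]
  · intro i
    have := i.isLt
    rw [pathBiadjacency, of_apply, if_pos]
    · exact one_ne_zero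
    · simp only [true_or, true_and]
      omega

theorem stmt0_general (n a b a' b' : ℕ) (hb : b < 2 * n) :
    (Matrix.of (fun u v : Fin (2 * n + 1) =>
      if Even u.val ∧ ¬ Even v.val ∧ (u.val = v.val + 1 ∨ v.val = u.val + 1) ∧
         a ≤ min u.val v.val ∧ min u.val v.val ≤ b ∧
         a' ≤ min u.val v.val ∧ min u.val v.val ≤ b'
      then (1 : ℚ) else 0)).rank
      = (min b b' + 1 - max a a' + 1) / 2 := by
  rw [← rank_pathBiadjacency ℚ (N := 2 * n + 1) (L := max a a') (by omega)]
  obtain hL | hL := Nat.even_or_odd (max a a')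
  · rw [← rank_transpose]
    congr 1
    ext u v
    simp only [pathBiadjacency, of_apply, transpose_apply, Nat.even_iff] at hL ⊢
    exact if_congr (by omega) rfl rfl
  · congr 1
    ext u v
    simp only [pathBiadjacency, of_apply, Nat.even_iff, Nat.odd_iff] at hL ⊢
    exact if_congr (by omega) rfl rfl

/-- For intervals `J = [a,b]` and `J' = [a',b']` of arrows of the bipartite
type `A` quiver with `2n+1` vertices (vertex `v` for `0 ≤ v ≤ 2n`, arrow `t` joining
vertices `t` and `t+1`, oriented from the odd vertex to the even vertex), the rank of the
snake matrix `M_J` evaluated at the interval indecomposable `I_{J'}` equals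
`⌈#(J ∩ J')/2⌉`.  The matrix `M_J(I_{J'})` is modelled concretely (all blocks of size ≤ 1):
its `(u,v)` entry is `1` exactly when `u` is an even vertex, `v` is an odd vertex, `u,v`
are joined by an arrow belonging to both `J` and `J'`, and `0` otherwise. -/
theorem stmt0 (n a b a' b' : ℕ) (hab : a ≤ b) (hb : b < 2 * n)
    (hab' : a' ≤ b') (hb' : b' < 2 * n) :
    (Matrix.of (fun u v : Fin (2 * n + 1) =>
      if Even u.val ∧ ¬ Even v.val ∧ (u.val = v.val + 1 ∨ v.val = u.val + 1) ∧
         a ≤ min u.val v.val ∧ min u.val v.val ≤ b ∧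
         a' ≤ min u.val v.val ∧ min u.val v.val ≤ b'
      then (1 : ℚ) else 0)).rank
      = (min b b' + 1 - max a a' + 1) / 2 :=
  stmt0_general n a b a' b' hb
end

section
/- A function r from intervals of Q to nonnegative integers is a quiver rank array (i.e., realized by some representation) if and only if for every interval J with at least one arrow, the quantity (-1)^{#J}( r(J_L) + r(J_R) - r(J_L ∩ J_R) - r(J_L ∪ J_R) ) is a nonnegative integer, where J_L, J_R are the leftward and rightward shifts of J truncated to Q. -/
/-- `⌈x/2⌉` for a nonnegative integer `x`. -/
def ceilHalf (x : ℤ) : ℤ := (x + 1) / 2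

/-- The number of arrows in the intersection of the intervals `[p,q]` and `[a',b']`. -/
def interCount (p q a' b' : ℤ) : ℤ := max 0 (min q b' + 1 - max p a')

/-- The lace-to-rank formula: the rank function of the representation
`⊕_{J'} s_{J'} I_{J'}` of the bipartite type `A` quiver with arrows `0,…,m-1`. -/
noncomputable def laceToRank (m : ℤ) (s : ℤ → ℤ → ℕ) (p q : ℤ) : ℤ :=
  ∑ a' ∈ Finset.Icc 0 (m - 1), ∑ b' ∈ Finset.Icc a' (m - 1),
    (s a' b' : ℤ) * ceilHalf (interCount p q a' b')

/-!
The rank array of `⊕ s_{J'} I_{J'}` is `A s` with `A(J, J') = ⌈#(J ∩ J')/2⌉`, and a direct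
computation shows that the lace formula `D` sends the rank array of a single `I_{J'}` to the
indicator of `J'`. As matrices indexed by the intervals of `Q` this says `D A = 1`, hence also
`A D = 1`: the multiplicities of a rank array are its lace multiplicities (so these are
nonnegative), and every `r` equals `A (D r)`, which is realized as soon as `D r ≥ 0`.
-/

open Finset Matrix

-- `r_{[p,q]}(I_{[a',b']})`
def intervalRank (a' b' p q : ℤ) : ℤ := ceilHalf (interCount p q a' b')

-- With `J = [a, b]`: `J_L = [a-1, b-1]`, `J_R = [a+1, b+1]`, `J_L ∩ J_R = [a+1, b-1]` and
-- `J_L ∪ J_R = [a-1, b+1]`.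
def laceMult (f : ℤ → ℤ → ℤ) (a b : ℤ) : ℤ :=
  (-1) ^ ((b - a + 1).toNat) *
    (f (a - 1) (b - 1) + f (a + 1) (b + 1) - f (a + 1) (b - 1) - f (a - 1) (b + 1))

theorem laceMult_intervalRank {a b : ℤ} (hab : a ≤ b) (a' b' : ℤ) :
    laceMult (intervalRank a' b') a b = if (a', b') = (a, b) then 1 else 0 := by
  simp only [laceMult, intervalRank, ceilHalf, interCount, Prod.mk.injEq]
  rcases Nat.even_or_odd (b - a + 1).toNat with h | h
  · rw [h.neg_one_pow]
    rw [Nat.even_iff] at h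
    split <;> omega
  · rw [h.neg_one_pow]
    rw [Nat.odd_iff] at h
    split <;> omega

theorem laceMult_sum {ι : Type*} (s : Finset ι) (c : ι → ℤ) (f : ι → ℤ → ℤ → ℤ) (a b : ℤ) :
    laceMult (fun p q => ∑ i ∈ s, c i * f i p q) a b = ∑ i ∈ s, c i * laceMult (f i) a b := by
  simp only [laceMult, ← sum_add_distrib, ← sum_sub_distrib, mul_sum]
  exact sum_congr rfl fun i _ => by ring

noncomputable def quiverIntervals (m : ℤ) : Finset (ℤ × ℤ) :=
  (Icc 0 (m - 1) ×ˢ Icc 0 (m - 1)).filter fun x => x.1 ≤ x.2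

theorem mem_quiverIntervals {m : ℤ} {x : ℤ × ℤ} :
    x ∈ quiverIntervals m ↔ 0 ≤ x.1 ∧ x.1 ≤ x.2 ∧ x.2 ≤ m - 1 := by
  simp only [quiverIntervals, mem_filter, mem_product, mem_Icc]
  omega

theorem laceToRank_eq_sum_quiverIntervals (m : ℤ) (s : ℤ → ℤ → ℕ) (p q : ℤ) :
    laceToRank m s p q =
      ∑ y ∈ quiverIntervals m, (s y.1 y.2 : ℤ) * intervalRank y.1 y.2 p q := by
  rw [sum_finset_product (quiverIntervals m) (Icc 0 (m - 1)) fun a => Icc a (m - 1)]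
  · rfl
  · intro y
    simp only [mem_quiverIntervals, mem_Icc]
    omega

structure IsTruncated (m : ℤ) (f : ℤ → ℤ → ℤ) : Prop where
  trunc : ∀ p q, f p q = f (max 0 p) (min (m - 1) q)
  empty : ∀ p q, q < p → f p q = 0

theorem isTruncated_intervalRank {m a' b' : ℤ} (ha' : 0 ≤ a') (hb' : b' ≤ m - 1) :
    IsTruncated m (intervalRank a' b') where
  trunc p q := by simp only [intervalRank, ceilHalf, interCount]; omega
  empty p q h := by simp only [intervalRank, ceilHalf, interCount]; omega

theorem isTruncated_sum_mul_intervalRank (m : ℤ) (c : ℤ × ℤ → ℤ) :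
    IsTruncated m fun p q => ∑ y ∈ quiverIntervals m, c y * intervalRank y.1 y.2 p q where
  trunc p q := sum_congr rfl fun y hy => by
    rw [mem_quiverIntervals] at hy
    rw [(isTruncated_intervalRank hy.1 hy.2.2).trunc p q]
  empty p q h := sum_eq_zero fun y hy => by
    rw [mem_quiverIntervals] at hy
    rw [(isTruncated_intervalRank hy.1 hy.2.2).empty p q h, mul_zero]

def truncIndicator (m : ℤ) (y : ℤ × ℤ) (p q : ℤ) : ℤ :=
  if (max 0 p, min (m - 1) q) = y then 1 else 0

theorem IsTruncated.eq_sum_truncIndicator {m : ℤ} {f : ℤ → ℤ → ℤ} (hf : IsTruncated m f)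
    (p q : ℤ) :
    f p q = ∑ y ∈ quiverIntervals m, f y.1 y.2 * truncIndicator m y p q := by
  simp only [truncIndicator, mul_ite, mul_one, mul_zero, sum_ite_eq]
  split_ifs with h
  · exact hf.trunc p q
  · rw [hf.trunc, hf.empty]
    rw [mem_quiverIntervals] at h
    omega

theorem IsTruncated.ext {m : ℤ} {f g : ℤ → ℤ → ℤ} (hf : IsTruncated m f) (hg : IsTruncated m g)
    (h : ∀ x ∈ quiverIntervals m, f x.1 x.2 = g x.1 x.2) : f = g := by
  ext p q
  rw [hf.eq_sum_truncIndicator, hg.eq_sum_truncIndicator]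
  exact sum_congr rfl fun y hy => by rw [h y hy]

def rankMatrix (m : ℤ) : Matrix (quiverIntervals m) (quiverIntervals m) ℤ :=
  fun x y => intervalRank y.1.1 y.1.2 x.1.1 x.1.2

def laceMatrix (m : ℤ) : Matrix (quiverIntervals m) (quiverIntervals m) ℤ :=
  fun x y => laceMult (truncIndicator m y) x.1.1 x.1.2

theorem IsTruncated.laceMult_eq_mulVec {m : ℤ} {f : ℤ → ℤ → ℤ} (hf : IsTruncated m f)
    (x : quiverIntervals m) :
    laceMult f x.1.1 x.1.2 = (laceMatrix m *ᵥ fun y => f y.1.1 y.1.2) x := by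
  have hsum :=
    laceMult_sum (quiverIntervals m) (fun y => f y.1 y.2) (truncIndicator m) x.1.1 x.1.2
  rw [← funext₂ hf.eq_sum_truncIndicator] at hsum
  rw [hsum, ← sum_coe_sort]
  exact sum_congr rfl fun y _ => mul_comm _ _

theorem laceMatrix_mul_rankMatrix (m : ℤ) : laceMatrix m * rankMatrix m = 1 := by
  ext x z
  obtain ⟨hz₀, -, hzm⟩ := mem_quiverIntervals.mp z.2
  calc (laceMatrix m * rankMatrix m) x z
      = laceMult (intervalRank z.1.1 z.1.2) x.1.1 x.1.2 :=
        ((isTruncated_intervalRank hz₀ hzm).laceMult_eq_mulVec x).symm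
    _ = (1 : Matrix (quiverIntervals m) (quiverIntervals m) ℤ) x z := by
        rw [laceMult_intervalRank (mem_quiverIntervals.mp x.2).2.1, one_apply]
        simp only [Prod.mk.eta, Subtype.ext_iff, eq_comm]

theorem IsTruncated.eq_sum_laceMult_mul_intervalRank {m : ℤ} {f : ℤ → ℤ → ℤ}
    (hf : IsTruncated m f) (p q : ℤ) :
    f p q = ∑ y ∈ quiverIntervals m, laceMult f y.1 y.2 * intervalRank y.1 y.2 p q := by
  refine congrFun₂ (hf.ext (isTruncated_sum_mul_intervalRank m _) fun x hx => ?_) p q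
  -- `D A = 1` for square matrices forces `A D = 1`.
  have hinv := congrArg (· *ᵥ fun y : quiverIntervals m => f y.1.1 y.1.2)
    (mul_eq_one_comm.mp (laceMatrix_mul_rankMatrix m))
  have := congrFun hinv ⟨x, hx⟩
  simp only [← mulVec_mulVec, one_mulVec] at this
  rw [← this, ← sum_coe_sort]
  exact sum_congr rfl fun y _ => by rw [mul_comm, hf.laceMult_eq_mulVec]; rfl

theorem laceMult_laceToRank {m : ℤ} (s : ℤ → ℤ → ℕ) {a b : ℤ}
    (hJ : (a, b) ∈ quiverIntervals m) :
    laceMult (laceToRank m s) a b = s a b := by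
  rw [funext₂ (laceToRank_eq_sum_quiverIntervals m s), laceMult_sum]
  simp only [laceMult_intervalRank (mem_quiverIntervals.mp hJ).2.1, mul_ite, mul_one, mul_zero,
    sum_ite_eq', if_pos hJ]

theorem stmt3_general (m : ℤ) (r : ℤ → ℤ → ℤ)
    (htrunc : ∀ p q : ℤ, r p q = r (max 0 p) (min (m - 1) q))
    (hempty : ∀ p q : ℤ, q < p → r p q = 0) :
    (∃ s : ℤ → ℤ → ℕ,
        (∀ a b : ℤ, s a b ≠ 0 → 0 ≤ a ∧ a ≤ b ∧ b ≤ m - 1) ∧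
        ∀ p q : ℤ, r p q = laceToRank m s p q)
      ↔ ∀ a b : ℤ, 0 ≤ a → a ≤ b → b ≤ m - 1 →
          0 ≤ (-1) ^ ((b - a + 1).toNat) *
            (r (a - 1) (b - 1) + r (a + 1) (b + 1)
              - r (a + 1) (b - 1) - r (a - 1) (b + 1)) := by
  constructor
  · rintro ⟨s, -, hrs⟩ a b ha hab hb
    obtain rfl : r = laceToRank m s := funext₂ hrs
    change 0 ≤ laceMult (laceToRank m s) a b
    rw [laceMult_laceToRank s (mem_quiverIntervals.mpr ⟨ha, hab, hb⟩)]
    exact Int.natCast_nonneg _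
  · intro hnonneg
    let s a b := if (a, b) ∈ quiverIntervals m then (laceMult r a b).toNat else 0
    refine ⟨s, fun a b hs => ?_, fun p q => ?_⟩
    · by_contra hJ
      exact hs (if_neg (mt mem_quiverIntervals.mp hJ))
    · rw [IsTruncated.eq_sum_laceMult_mul_intervalRank ⟨htrunc, hempty⟩ p q,
        laceToRank_eq_sum_quiverIntervals]
      refine sum_congr rfl fun y hy => ?_
      obtain ⟨ha, hab, hb⟩ := mem_quiverIntervals.mp hy
      rw [show s y.1 y.2 = (laceMult r y.1 y.2).toNat from if_pos hy,
        Int.toNat_of_nonneg (show 0 ≤ laceMult r y.1 y.2 from hnonneg y.1 y.2 ha hab hb)]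

/-- a function `r` on intervals of the bipartite type `A` quiver `Q` with
arrows `0,…,m-1` (extended to all integer intervals by truncation – equivalently by
working with a longer quiver with zero dimension vector at the new vertices – and by `0`
on empty intervals) is a quiver rank array, i.e. is realized by a representation
`⊕ s_{J'} I_{J'}` of `Q` with multiplicities `s_{J'} ∈ ℤ_{≥0}`, if and only if for every
interval `J = [a,b] ⊆ Q` with at least one arrow the quantity
`(-1)^{#J}( r(J_L) + r(J_R) - r(J_L ∩ J_R) - r(J_L ∪ J_R) )` is nonnegative. -/
theorem stmt3 (m : ℤ) (hm : 1 ≤ m) (r : ℤ → ℤ → ℤ)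
    (htrunc : ∀ p q : ℤ, r p q = r (max 0 p) (min (m - 1) q))
    (hempty : ∀ p q : ℤ, q < p → r p q = 0) :
    (∃ s : ℤ → ℤ → ℕ,
        (∀ a b : ℤ, s a b ≠ 0 → 0 ≤ a ∧ a ≤ b ∧ b ≤ m - 1) ∧
        ∀ p q : ℤ, r p q = laceToRank m s p q)
      ↔ ∀ a b : ℤ, 0 ≤ a → a ≤ b → b ≤ m - 1 →
          0 ≤ (-1) ^ ((b - a + 1).toNat) *
            (r (a - 1) (b - 1) + r (a + 1) (b + 1)
              - r (a + 1) (b - 1) - r (a - 1) (b + 1)) :=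
  stmt3_general m r htrunc hempty
end

section
/- The 'lace to rank' formula: if V ≅ ⊕_{J'} s_{J'} I_{J'} is the Krull–Schmidt decomposition of a representation V of a bipartite type A quiver, then for every interval J, r_J(V) = Σ_{J'} s_{J'} ⌈#(J ∩ J')/2⌉. -/
/-! The snake matrix of `V = ⊕ s_{J'} I_{J'}` is block diagonal, with one block for each copy of
an indecomposable, and rank is additive over diagonal blocks. The block of `I_{[u,w]}` is the
snake matrix of the path on the vertex interval `J ∩ [u,w] = [m, M]`. Its nonzero rows sit at the
`(M - m + 1) / 2` vertices of `[m, M]` whose parity differs from that of `m`, and pairing each such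
vertex with its left neighbour gives a unitriangular square submatrix of the same size, so this is
exactly its rank. -/

open Matrix Module

section BlockDiagonal

variable {K : Type*} [Field K]

def Submodule.piUnivEquiv {ι : Type*} {V : ι → Type*} [∀ i, AddCommGroup (V i)]
    [∀ i, Module K (V i)] (p : ∀ i, Submodule K (V i)) :
    Submodule.pi Set.univ p ≃ₗ[K] ∀ i, p i where
  toFun x i := ⟨x.1 i, x.2 i (Set.mem_univ i)⟩
  map_add' _ _ := rfl
  map_smul' _ _ := rfl
  invFun y := ⟨fun i => y i, fun i _ => (y i).2⟩
  left_inv _ := rfl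
  right_inv _ := rfl

theorem LinearMap.range_piMap {ι : Type*} {V W : ι → Type*} [∀ i, AddCommGroup (V i)]
    [∀ i, Module K (V i)] [∀ i, AddCommGroup (W i)] [∀ i, Module K (W i)]
    (f : ∀ i, V i →ₗ[K] W i) :
    range (piMap f) = Submodule.pi Set.univ fun i => range (f i) := by
  ext y
  simp only [LinearMap.mem_range, Submodule.mem_pi, Set.mem_univ, forall_const, coe_piMap]
  constructor
  · rintro ⟨x, rfl⟩ i
    exact ⟨x i, rfl⟩
  · intro h
    choose x hx using h
    exact ⟨x, funext hx⟩

theorem LinearMap.finrank_range_piMap {ι : Type*} [Fintype ι] {V W : ι → Type*}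
    [∀ i, AddCommGroup (V i)] [∀ i, Module K (V i)] [∀ i, AddCommGroup (W i)]
    [∀ i, Module K (W i)] [∀ i, FiniteDimensional K (W i)] (f : ∀ i, V i →ₗ[K] W i) :
    finrank K (range (piMap f)) = ∑ i, finrank K (range (f i)) := by
  rw [range_piMap, (Submodule.piUnivEquiv _).finrank_eq, finrank_pi_fintype]

theorem Matrix.rank_blockDiagonal {o m n : Type*} [Fintype o] [Fintype m] [Fintype n]
    [DecidableEq o] (B : o → Matrix m n K) :
    (blockDiagonal B).rank = ∑ k, (B k).rank := by
  let eₘ := (LinearEquiv.funCongrLeft K K (Equiv.prodComm o m)).trans (LinearEquiv.curry K K o m)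
  let eₙ := (LinearEquiv.funCongrLeft K K (Equiv.prodComm o n)).trans (LinearEquiv.curry K K o n)
  have hconj : (blockDiagonal B).mulVecLin =
      eₘ.symm.toLinearMap ∘ₗ LinearMap.piMap (fun k => (B k).mulVecLin) ∘ₗ eₙ.toLinearMap := by
    ext x ⟨i, k⟩
    simp [eₘ, eₙ, mulVec, dotProduct, blockDiagonal_apply, Fintype.sum_prod_type, ite_mul,
      Finset.sum_ite_eq]
  rw [rank, hconj, LinearMap.range_comp, LinearMap.range_comp, LinearEquiv.range,
    Submodule.map_top, LinearEquiv.finrank_map_eq, LinearMap.finrank_range_piMap]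
  rfl

end BlockDiagonal

section Path

variable (K : Type*) [Field K] (N m M : ℕ)

def snakeMatrix : Matrix (Fin (N + 1)) (Fin (N + 1)) K :=
  of fun v v' => if Even v.val ∧ ¬ Even v'.val ∧ (v.val = v'.val + 1 ∨ v'.val = v.val + 1) ∧
    m ≤ v.val ∧ v.val ≤ M ∧ m ≤ v'.val ∧ v'.val ≤ M then 1 else 0

def alternatingPathMatrix : Matrix (Fin (N + 1)) (Fin (N + 1)) K :=
  of fun v v' => if v.val % 2 ≠ m % 2 ∧ v'.val % 2 = m % 2 ∧
    (v.val = v'.val + 1 ∨ v'.val = v.val + 1) ∧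
    m ≤ v.val ∧ v.val ≤ M ∧ m ≤ v'.val ∧ v'.val ≤ M then 1 else 0

variable {N m M}

theorem rank_alternatingPathMatrix_le (hM : M ≤ N) :
    (alternatingPathMatrix K N m M).rank ≤ (M - m + 1) / 2 := by
  let rows : Finset (Fin (N + 1)) :=
    Finset.univ.image fun i : Fin ((M - m + 1) / 2) => ⟨m + 2 * i + 1, by omega⟩
  have hsupp : Function.support (alternatingPathMatrix K N m M).row ⊆ rows := by
    intro v hv
    by_contra hvr
    refine hv (funext fun v' => if_neg ?_)
    rintro ⟨hpar, -, -, hmv, hvM, -⟩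
    exact hvr (Finset.mem_image.mpr ⟨⟨(v - m - 1) / 2, by omega⟩, Finset.mem_univ _,
      Fin.ext (by simp only; omega)⟩)
  calc _ ≤ rows.card := rank_le_card_of_support_subset _ _ hsupp
    _ ≤ _ := Finset.card_image_le.trans (by simp)

theorem le_rank_alternatingPathMatrix (hM : M ≤ N) :
    (M - m + 1) / 2 ≤ (alternatingPathMatrix K N m M).rank := by
  set k := (M - m + 1) / 2
  let S := (alternatingPathMatrix K N m M).submatrix
    (fun i : Fin k => (⟨m + 2 * i + 1, by omega⟩ : Fin (N + 1)))
    (fun j : Fin k => (⟨m + 2 * j, by omega⟩ : Fin (N + 1)))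
  -- row `m + 2i + 1` meets only the columns `m + 2i` and `m + 2i + 2`
  have hS : S.IsUpperTriangular := by
    intro i j hji
    refine if_neg ?_
    rintro ⟨-, -, hadj, -⟩
    have : (j : ℕ) < i := hji
    simp only at hadj
    omega
  have hdet : S.det = 1 := by
    rw [det_of_isUpperTriangular hS]
    refine Finset.prod_eq_one fun i _ => if_pos ?_
    have := i.isLt
    simp only [true_or, true_and]
    omega
  calc k = S.rank := by rw [rank_of_det_ne_zero (by simp [hdet]), Fintype.card_fin]
    _ ≤ _ := rank_submatrix_le _ _ _

theorem rank_alternatingPathMatrix (hM : M ≤ N) :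
    (alternatingPathMatrix K N m M).rank = (M - m + 1) / 2 :=
  (rank_alternatingPathMatrix_le K hM).antisymm (le_rank_alternatingPathMatrix K hM)

theorem snakeMatrix_eq :
    snakeMatrix K N m M = if Even m then (alternatingPathMatrix K N m M)ᵀ
      else alternatingPathMatrix K N m M := by
  ext v v'
  split_ifs with hm <;>
  · simp only [snakeMatrix, alternatingPathMatrix, transpose_apply, of_apply]
    refine if_congr ?_ rfl rfl
    simp only [Nat.even_iff] at hm ⊢
    omega

theorem rank_snakeMatrix (hM : M ≤ N) : (snakeMatrix K N m M).rank = (M - m + 1) / 2 := by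
  rw [snakeMatrix_eq]
  split_ifs
  · rw [rank_transpose, rank_alternatingPathMatrix K hM]
  · exact rank_alternatingPathMatrix K hM

end Path

theorem stmt5_general (N a b : ℕ)
    (s : Fin (N + 1) → Fin (N + 1) → ℕ) :
    (Matrix.of (fun p q : Fin (N + 1) × ((u : Fin (N + 1)) × (w : Fin (N + 1)) × Fin (s u w)) =>
      if Even p.1.val ∧ ¬ Even q.1.val ∧
         (p.1.val = q.1.val + 1 ∨ q.1.val = p.1.val + 1) ∧
         a ≤ p.1.val ∧ p.1.val ≤ b ∧ a ≤ q.1.val ∧ q.1.val ≤ b ∧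
         p.2 = q.2 ∧
         p.2.1.val ≤ p.1.val ∧ p.1.val ≤ p.2.2.1.val ∧
         p.2.1.val ≤ q.1.val ∧ q.1.val ≤ p.2.2.1.val
      then (1 : ℚ) else 0)).rank
      = ∑ u : Fin (N + 1), ∑ w : Fin (N + 1),
          if u.val ≤ w.val then s u w * ((min b w.val - max a u.val + 1) / 2) else 0 := by
  trans (blockDiagonal fun x : (u : Fin (N + 1)) × (w : Fin (N + 1)) × Fin (s u w) =>
    snakeMatrix ℚ N (max a x.1) (min b x.2.1)).rank
  · congr 1
    ext ⟨v, x⟩ ⟨v', y⟩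
    by_cases hxy : x = y
    · subst hxy
      rw [blockDiagonal_apply_eq, snakeMatrix, of_apply, of_apply]
      refine if_congr ?_ rfl rfl
      simp only [true_and, max_le_iff, le_min_iff]
      tauto
    · rw [blockDiagonal_apply_ne _ _ _ hxy, of_apply, if_neg]
      rintro ⟨-, -, -, -, -, -, -, hxy', -⟩
      exact hxy hxy'
  rw [rank_blockDiagonal, Fintype.sum_sigma]
  refine Fintype.sum_congr _ _ fun u => ?_
  rw [Fintype.sum_sigma]
  refine Fintype.sum_congr _ _ fun w => ?_
  simp only [rank_snakeMatrix ℚ (min_le_of_right_le (Nat.le_of_lt_succ w.isLt)),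
    Finset.sum_const, Finset.card_univ, Fintype.card_fin, smul_eq_mul]
  split_ifs with huw
  · rfl
  · rw [Nat.div_eq_of_lt (by omega), mul_zero]

/-- lace-to-rank formula: if `V ≅ ⊕_{J'} s_{J'} I_{J'}` is the
Krull–Schmidt decomposition of a representation of the bipartite type `A` quiver with
vertices `0,…,N` (`N = 2n`; even vertices are the sinks `y_k`, odd vertices the sources
`x_k`, each arrow joining consecutive vertices and oriented odd → even), then for every
interval `J` one has `r_J(V) = Σ_{J'} s_{J'} ⌈#(J ∩ J')/2⌉`.
Here `V` is modelled concretely: the space at vertex `v` has basis indexed by the triples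
`(u,w,k)` with `u ≤ v ≤ w` and `k < s u w` (one basis vector for each copy of `I_{[u,w]}`
through `v`), and the snake matrix `M_J(V)` of the vertex interval `J = [a,b]` has a `1`
in position `((v,(u,w,k)), (v',(u',w',k')))` exactly when `(u,w,k) = (u',w',k')`, `v` is
even, `v'` is odd, `v,v'` are joined by an arrow of `J`, and both lie in `[u,w]`. -/
theorem stmt5 (N a b : ℕ) (hab : a ≤ b) (hb : b ≤ N)
    (s : Fin (N + 1) → Fin (N + 1) → ℕ) :
    (Matrix.of (fun p q : Fin (N + 1) × ((u : Fin (N + 1)) × (w : Fin (N + 1)) × Fin (s u w)) =>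
      if Even p.1.val ∧ ¬ Even q.1.val ∧
         (p.1.val = q.1.val + 1 ∨ q.1.val = p.1.val + 1) ∧
         a ≤ p.1.val ∧ p.1.val ≤ b ∧ a ≤ q.1.val ∧ q.1.val ≤ b ∧
         p.2 = q.2 ∧
         p.2.1.val ≤ p.1.val ∧ p.1.val ≤ p.2.2.1.val ∧
         p.2.1.val ≤ q.1.val ∧ q.1.val ≤ p.2.2.1.val
      then (1 : ℚ) else 0)).rank
      = ∑ u : Fin (N + 1), ∑ w : Fin (N + 1),
          if u.val ≤ w.val then s u w * ((min b w.val - max a u.val + 1) / 2) else 0 :=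
  stmt5_general N a b s
end

section
/- Existence and uniqueness of the Zelevinsky permutation: given any (2n+1)×(2n+1) block structure with prescribed block row heights and column widths and a block rank matrix b coming from a quiver rank array, there is a unique permutation matrix v such that (1) the number of 1s in block (i,j) equals b_{i,j} + b_{i-1,j-1} - b_{i,j-1} - b_{i-1,j} (with b_{i,j} = 0 when i or j is out of range), (2) within each block row the 1s proceed from northwest to southeast, and (3) within each block column the 1s proceed from northwest to southeast. -/
/-!
Let `N i j` be the mixed second differences of `b`; they are nonnegative and telescope to row
sums `h i` and column sums `w j`. A permutation with the three properties is forced. Inside block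
row `i`, `σ` is increasing and the block column index is monotone, so the rows of block row `i`
go to block columns `0, 1, …` in consecutive runs of lengths `N i 0, N i 1, …`. Inside a block
column, `σ⁻¹` is increasing, so `σ` maps the rows assigned to that column onto it in increasing
order. Read as a definition, this gives existence: `σ x` is the position of
`(block column of x, x)` in the lexicographic order.
-/

/-- Cumulative block sizes: `cum f k` is the first row/column index of block `k`
(0-indexed blocks, so block `k` occupies indices `cum f k ≤ r < cum f (k+1)`). -/
def cum (f : ℕ → ℕ) (k : ℕ) : ℕ := ∑ i ∈ Finset.range k, f i

open Finset Function

theorem Monotone.eq_of_card_fiber_eq {α β : Type*} [Fintype α] [LinearOrder α] [LinearOrder β]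
    {f g : α → β} (hf : Monotone f) (hg : Monotone g)
    (hfg : ∀ b, #{x | f x = b} = #{x | g x = b}) : f = g := by
  let e := Fintype.orderIsoFinOfCardEq α rfl
  suffices f ∘ e = g ∘ e from funext fun x => by simpa using congrFun this (e.symm x)
  have hperm : (List.ofFn (f ∘ e)).Perm (List.ofFn (g ∘ e)) := by
    have he : Multiset.map e univ.val = univ.val := Multiset.map_univ_val_equiv e.toEquiv
    rw [← Multiset.coe_eq_coe, ← Fin.univ_val_map, ← Fin.univ_val_map, ← Multiset.map_map,
      ← Multiset.map_map, he]
    ext b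
    simp only [Multiset.count_map, ← Finset.filter_val, Finset.card_val, eq_comm (a := b)]
    exact hfg b
  exact List.ofFn_injective <|
    hperm.eq_of_sortedLE (hf.comp e.monotone).sortedLE_ofFn (hg.comp e.monotone).sortedLE_ofFn

theorem Equiv.Perm.eq_of_strictMonoOn_blocks {α ι κ : Type*} [Fintype α] [LinearOrder α]
    [DecidableEq ι] [LinearOrder κ] {row : α → ι} {col : α → κ} (hcol : Monotone col)
    {σ τ : Equiv.Perm α}
    (hσr : ∀ i, StrictMonoOn σ {x | row x = i}) (hσc : ∀ j, StrictMonoOn σ.symm {c | col c = j})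
    (hτr : ∀ i, StrictMonoOn τ {x | row x = i}) (hτc : ∀ j, StrictMonoOn τ.symm {c | col c = j})
    (hcount : ∀ i j, #{x | row x = i ∧ col (σ x) = j} = #{x | row x = i ∧ col (τ x) = j}) :
    σ = τ := by
  have hcol_eq : ∀ x, col (σ x) = col (τ x) := by
    intro x
    have hmono : ∀ π : Equiv.Perm α, (∀ i, StrictMonoOn π {x | row x = i}) →
        Monotone fun y : {y // row y = row x} => col (π y) :=
      fun π hπ y z hyz => hcol ((hπ (row x)).monotoneOn y.2 z.2 hyz)
    have hcard : ∀ (π : Equiv.Perm α) j,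
        #{y : {y // row y = row x} | col (π y) = j} = #{y | row y = row x ∧ col (π y) = j} := by
      intro π j
      rw [← Fintype.card_subtype, ← Fintype.card_subtype,
        Fintype.card_congr (Equiv.subtypeSubtypeEquivSubtypeInter (fun y => row y = row x)
          (fun y => col (π y) = j))]
    have := (hmono σ hσr).eq_of_card_fiber_eq (hmono τ hτr) fun j => by
      rw [hcard, hcard, hcount]
    exact congrFun this ⟨x, rfl⟩
  ext x
  let S := {y // col (σ y) = col (σ x)}
  have hrange : ∀ π : Equiv.Perm α, (∀ y, col (π y) = col (σ y)) →
      Set.range (fun y : S => π y) = {c | col c = col (σ x)} := by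
    intro π hπ
    ext c
    refine ⟨?_, fun hc => ⟨⟨π.symm c, by rw [← hπ, π.apply_symm_apply]; exact hc⟩, by simp⟩⟩
    rintro ⟨y, rfl⟩
    exact (hπ y).trans y.2
  have hstrict : ∀ π : Equiv.Perm α, (∀ j, StrictMonoOn π.symm {c | col c = j}) →
      (∀ y, col (π y) = col (σ y)) → StrictMono fun y : S => π y := by
    intro π hπ hcolπ y z hyz
    have hy : π y ∈ {c | col c = col (σ x)} := (hcolπ y).trans y.2
    have hz : π z ∈ {c | col c = col (σ x)} := (hcolπ z).trans z.2
    rwa [← (hπ _).lt_iff_lt hy hz, π.symm_apply_apply, π.symm_apply_apply]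
  have hτcol : ∀ y, col (τ y) = col (σ y) := fun y => (hcol_eq y).symm
  have := ((hstrict σ hσc fun _ => rfl).range_inj (hstrict τ hτc hτcol)).1
    ((hrange σ fun _ => rfl).trans (hrange τ hτcol).symm)
  exact congrFun this ⟨x, rfl⟩

lemma cum_mono (f : ℕ → ℕ) : Monotone (cum f) := fun _ _ hab =>
  sum_le_sum_of_subset (range_subset_range.mpr hab)

lemma cum_succ (f : ℕ → ℕ) (k : ℕ) : cum f (k + 1) = cum f k + f k := sum_range_succ f k

/-- `x` lies in the block `[cum f k, cum f (k + 1))` with `k = blockIndex f x` (junk value `0` when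
`x` lies beyond every block). -/
noncomputable def blockIndex (f : ℕ → ℕ) (x : ℕ) : ℕ := sInf {k | x < cum f (k + 1)}

section blockIndex

variable {f : ℕ → ℕ} {M x y k : ℕ}

lemma blockIndex_spec (hx : x < cum f M) :
    cum f (blockIndex f x) ≤ x ∧ x < cum f (blockIndex f x + 1) := by
  refine ⟨?_, Nat.sInf_mem (s := {k | x < cum f (k + 1)})
    ⟨M, show x < cum f (M + 1) from hx.trans_le (cum_mono f M.le_succ)⟩⟩
  by_contra! hlt
  cases hk : blockIndex f x with
  | zero => simp [hk, cum] at hlt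
  | succ k =>
    rw [hk] at hlt
    have : blockIndex f x ≤ k := Nat.sInf_le hlt
    omega

lemma blockIndex_eq_iff (hx : x < cum f M) :
    blockIndex f x = k ↔ cum f k ≤ x ∧ x < cum f (k + 1) := by
  obtain ⟨h1, h2⟩ := blockIndex_spec hx
  refine ⟨by rintro rfl; exact ⟨h1, h2⟩, fun ⟨hk1, hk2⟩ => ?_⟩
  by_contra hne
  obtain hlt | hlt := Nat.lt_or_gt_of_ne hne
  · have : cum f (blockIndex f x + 1) ≤ cum f k := cum_mono f hlt
    omega
  · have : cum f (k + 1) ≤ cum f (blockIndex f x) := cum_mono f hlt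
    omega

lemma blockIndex_lt (hx : x < cum f M) : blockIndex f x < M := by
  by_contra! hM
  exact (blockIndex_spec hx).1.not_gt (hx.trans_le (cum_mono f hM))

lemma blockIndex_mono (hxy : x ≤ y) (hy : y < cum f M) : blockIndex f x ≤ blockIndex f y := by
  by_contra! hlt
  have := (blockIndex_spec (hxy.trans_lt hy)).1
  have := (blockIndex_spec hy).2
  have : cum f (blockIndex f y + 1) ≤ cum f (blockIndex f x) := cum_mono f hlt
  omega

end blockIndex

lemma Fin.card_filter_le_and_lt {d a b : ℕ} (hb : b ≤ d) :
    #{x : Fin d | a ≤ x ∧ x < b} = b - a := by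
  rw [← Nat.card_Ico, ← card_map Fin.valEmbedding]
  congr 1
  ext n
  simp only [mem_map, mem_filter, mem_univ, true_and, Fin.valEmbedding_apply, mem_Ico]
  exact ⟨by rintro ⟨x, hx, rfl⟩; exact hx, fun hn => ⟨⟨n, by omega⟩, hn, rfl⟩⟩

section keyRank

variable {α β : Type*} [Fintype α] [LinearOrder β] (key : α → β)

def keyRank (x : α) : ℕ := #{y | key y < key x}

variable {key}

lemma keyRank_lt_keyRank_iff {x y : α} : keyRank key x < keyRank key y ↔ key x < key y := by
  refine ⟨fun h => ?_, fun hxy => card_lt_card ?_⟩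
  · by_contra! hyx
    refine h.not_ge (card_le_card fun z => ?_)
    simpa using fun hz : key z < key y => hz.trans_le hyx
  · refine (ssubset_iff_of_subset fun z => ?_).2 ⟨x, by simpa using hxy, by simp⟩
    simpa using fun hz : key z < key x => hz.trans hxy

lemma keyRank_injective (hkey : Injective key) : Injective (keyRank key) := fun _ _ hxy =>
  hkey <| le_antisymm (not_lt.1 fun h => (keyRank_lt_keyRank_iff.2 h).ne' hxy)
    (not_lt.1 fun h => (keyRank_lt_keyRank_iff.2 h).ne hxy)

end keyRank

section rankPerm

variable {d : ℕ} {β : Type*} [LinearOrder β]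

noncomputable def rankPerm (key : Fin d → β) (hkey : Injective key) : Equiv.Perm (Fin d) :=
  Equiv.ofBijective
    (fun x => ⟨keyRank key x, (card_lt_univ_of_notMem (x := x) (by simp)).trans_eq (card_fin d)⟩)
    (Finite.injective_iff_bijective.1 fun _ _ hxy => keyRank_injective hkey (Fin.mk.inj hxy))

lemma val_rankPerm (key : Fin d → β) (hkey : Injective key) (x : Fin d) :
    (rankPerm key hkey x : ℕ) = keyRank key x := rfl

lemma rankPerm_lt_rankPerm_iff {key : Fin d → β} (hkey : Injective key) {x y : Fin d} :
    rankPerm key hkey x < rankPerm key hkey y ↔ key x < key y := by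
  rw [Fin.lt_def, val_rankPerm, val_rankPerm]
  exact keyRank_lt_keyRank_iff

end rankPerm

noncomputable def colBlock (N : ℕ → ℕ → ℕ) (h : ℕ → ℕ) (x : ℕ) : ℕ :=
  blockIndex (N (blockIndex h x)) (x - cum h (blockIndex h x))

section colBlock

variable {m d : ℕ} {N : ℕ → ℕ → ℕ} {h w : ℕ → ℕ} {i j x y : ℕ}

lemma sub_cum_blockIndex_lt (hh : ∀ i < m, h i = cum (N i) m) (hx : x < cum h m) :
    x - cum h (blockIndex h x) < cum (N (blockIndex h x)) m := by
  have := blockIndex_spec hx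
  have := cum_succ h (blockIndex h x)
  have := hh _ (blockIndex_lt hx)
  omega

lemma colBlock_lt (hh : ∀ i < m, h i = cum (N i) m) (hx : x < cum h m) : colBlock N h x < m :=
  blockIndex_lt (sub_cum_blockIndex_lt hh hx)

lemma colBlock_mono (hh : ∀ i < m, h i = cum (N i) m) (hxy : x ≤ y) (hy : y < cum h m)
    (hrow : blockIndex h x = blockIndex h y) : colBlock N h x ≤ colBlock N h y := by
  unfold colBlock
  rw [hrow]
  exact blockIndex_mono (by omega) (sub_cum_blockIndex_lt hh hy)

lemma blockIndex_eq_and_colBlock_eq_iff (hh : ∀ i < m, h i = cum (N i) m) (hx : x < cum h m)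
    (hi : i < m) (hj : j < m) : blockIndex h x = i ∧ colBlock N h x = j ↔
      cum h i + cum (N i) j ≤ x ∧ x < cum h i + cum (N i) (j + 1) := by
  have hsucc : cum h (i + 1) = cum h i + cum (N i) m := by rw [cum_succ, hh i hi]
  constructor
  · rintro ⟨rfl, hcol⟩
    have := blockIndex_spec hx
    have := (blockIndex_eq_iff (sub_cum_blockIndex_lt hh hx)).1 hcol
    omega
  · rintro ⟨h1, h2⟩
    have : cum (N i) (j + 1) ≤ cum (N i) m := cum_mono _ hj
    have hrow : blockIndex h x = i := (blockIndex_eq_iff hx).2 ⟨by omega, by omega⟩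
    refine ⟨hrow, ?_⟩
    have := sub_cum_blockIndex_lt hh hx
    rw [colBlock, hrow] at *
    exact (blockIndex_eq_iff this).2 ⟨by omega, by omega⟩

lemma card_blockIndex_eq_and_colBlock_eq (hh : ∀ i < m, h i = cum (N i) m) (hd : d = cum h m)
    (hi : i < m) (hj : j < m) :
    #{x : Fin d | blockIndex h x = i ∧ colBlock N h x = j} = N i j := by
  have : cum h (i + 1) ≤ cum h m := cum_mono h hi
  have : cum (N i) (j + 1) ≤ cum (N i) m := cum_mono _ hj
  rw [filter_congr fun x _ => blockIndex_eq_and_colBlock_eq_iff hh (x.2.trans_eq hd) hi hj,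
    Fin.card_filter_le_and_lt (by rw [cum_succ, hh i hi] at *; omega), cum_succ]
  omega

lemma card_colBlock_eq (hh : ∀ i < m, h i = cum (N i) m) (hw : ∀ j < m, w j = cum (N · j) m)
    (hd : d = cum h m) (hj : j < m) : #{x : Fin d | colBlock N h x = j} = w j := by
  rw [card_eq_sum_card_fiberwise (f := fun x : Fin d => blockIndex h x) (t := range m)
    fun x _ => mem_range.2 (blockIndex_lt (x.2.trans_eq hd)), hw j hj, cum]
  refine sum_congr rfl fun i hi => ?_
  rw [filter_filter, ← card_blockIndex_eq_and_colBlock_eq hh hd (mem_range.1 hi) hj]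
  simp only [and_comm]

lemma card_colBlock_lt (hh : ∀ i < m, h i = cum (N i) m) (hw : ∀ j < m, w j = cum (N · j) m)
    (hd : d = cum h m) (hj : j ≤ m) : #{x : Fin d | colBlock N h x < j} = cum w j := by
  rw [card_eq_sum_card_fiberwise (f := fun x : Fin d => colBlock N h x) (t := range j)
    fun x hx => mem_range.2 (mem_filter.1 hx).2, cum]
  refine sum_congr rfl fun k hk => ?_
  have hk := mem_range.1 hk
  rw [filter_filter, ← card_colBlock_eq hh hw hd (hk.trans_le hj)]
  congr 1
  exact filter_congr fun x _ => ⟨And.right, fun hx => ⟨by simp only at hx ⊢; omega, hx⟩⟩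

end colBlock

lemma colBlock_key_injective {d : ℕ} (N : ℕ → ℕ → ℕ) (h : ℕ → ℕ) :
    Injective fun x : Fin d => toLex (colBlock N h x, x) :=
  fun _ _ hxy => (Prod.ext_iff.1 (toLex.injective hxy)).2

noncomputable def blockPerm (d : ℕ) (N : ℕ → ℕ → ℕ) (h : ℕ → ℕ) : Equiv.Perm (Fin d) :=
  rankPerm _ (colBlock_key_injective N h)

section blockPerm

variable {m d : ℕ} {N : ℕ → ℕ → ℕ} {h w : ℕ → ℕ}

lemma blockPerm_lt_blockPerm_iff {x y : Fin d} : blockPerm d N h x < blockPerm d N h y ↔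
    colBlock N h x < colBlock N h y ∨ colBlock N h x = colBlock N h y ∧ x < y :=
  (rankPerm_lt_rankPerm_iff _).trans Prod.Lex.toLex_lt_toLex

lemma val_blockPerm (x : Fin d) : (blockPerm d N h x : ℕ) =
    #{y : Fin d | colBlock N h y < colBlock N h x} +
      #{y : Fin d | colBlock N h y = colBlock N h x ∧ y < x} := by
  rw [blockPerm, val_rankPerm, keyRank, ← card_union_of_disjoint, ← filter_or]
  · simp only [Prod.Lex.toLex_lt_toLex]
  · exact disjoint_filter.2 fun y _ hlt heq => hlt.ne heq.1

lemma blockIndex_blockPerm (hh : ∀ i < m, h i = cum (N i) m)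
    (hw : ∀ j < m, w j = cum (N · j) m) (hd : d = cum h m) (x : Fin d) :
    blockIndex w (blockPerm d N h x) = colBlock N h x := by
  have hJ := colBlock_lt hh (x.2.trans_eq hd)
  have hlt : #{y : Fin d | colBlock N h y = colBlock N h x ∧ y < x} < w (colBlock N h x) := by
    rw [← card_colBlock_eq hh hw hd hJ]
    refine card_lt_card ((ssubset_iff_of_subset fun y => ?_).2 ⟨x, by simp, by simp⟩)
    simpa using fun hy _ => hy
  have hval := val_blockPerm (N := N) (h := h) x
  rw [card_colBlock_lt hh hw hd hJ.le] at hval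
  exact (blockIndex_eq_iff (M := colBlock N h x + 1) (by rw [cum_succ]; omega)).2
    ⟨by omega, by rw [cum_succ]; omega⟩

theorem exists_perm_strictMonoOn_blocks (hh : ∀ i < m, h i = cum (N i) m)
    (hw : ∀ j < m, w j = cum (N · j) m) (hd : d = cum h m) :
    ∃ σ : Equiv.Perm (Fin d),
      (∀ i < m, ∀ j < m, #{x : Fin d | blockIndex h x = i ∧ blockIndex w (σ x) = j} = N i j) ∧
      (∀ i, StrictMonoOn σ {x : Fin d | blockIndex h x = i}) ∧
      (∀ j, StrictMonoOn σ.symm {c : Fin d | blockIndex w c = j}) := by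
  refine ⟨blockPerm d N h, fun i hi j hj => ?_, fun i x hx y hy hxy => ?_,
    fun j c hc c' hc' hcc' => ?_⟩
  · simp_rw [blockIndex_blockPerm hh hw hd]
    exact card_blockIndex_eq_and_colBlock_eq hh hd hi hj
  · rw [blockPerm_lt_blockPerm_iff]
    obtain hlt | heq := (colBlock_mono hh (Fin.le_def.1 hxy.le) (y.2.trans_eq hd)
      (hx.trans hy.symm)).lt_or_eq
    exacts [.inl hlt, .inr ⟨heq, hxy⟩]
  · have hcol : ∀ c : Fin d, blockIndex w c = colBlock N h ((blockPerm d N h).symm c) :=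
      fun c => by rw [← blockIndex_blockPerm hh hw hd, Equiv.apply_symm_apply]
    rw [← (blockPerm d N h).apply_symm_apply c, ← (blockPerm d N h).apply_symm_apply c',
      blockPerm_lt_blockPerm_iff, ← hcol, ← hcol, hc.trans hc'.symm] at hcc'
    exact hcc'.resolve_left (lt_irrefl _) |>.2

end blockPerm

section FinBlocks

variable {d M : ℕ} {f h w : ℕ → ℕ}

lemma monotone_blockIndex (hd : d = cum f M) : Monotone fun x : Fin d => blockIndex f x :=
  fun _ y hxy => blockIndex_mono hxy (y.2.trans_eq hd)

lemma strictMonoOn_blockIndex_iff {β : Type*} [Preorder β] (hd : d = cum f M) {g : Fin d → β} :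
    (∀ (i : ℕ) (x y : Fin d), i < M → cum f i ≤ x.val → y.val < cum f (i + 1) → x < y →
      g x < g y) ↔ ∀ i, StrictMonoOn g {x : Fin d | blockIndex f x = i} := by
  constructor
  · intro H i x hx y hy hxy
    have hx' := (blockIndex_eq_iff (x.2.trans_eq hd)).1 hx
    have hy' := (blockIndex_eq_iff (y.2.trans_eq hd)).1 hy
    exact H i x y (hx ▸ blockIndex_lt (x.2.trans_eq hd)) hx'.1 hy'.2 hxy
  · intro H i x y _ hx hy hxy
    have hxy' := Fin.lt_def.1 hxy
    exact H i ((blockIndex_eq_iff (x.2.trans_eq hd)).2 ⟨hx, by omega⟩)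
      ((blockIndex_eq_iff (y.2.trans_eq hd)).2 ⟨by omega, hy⟩) hxy

lemma card_filter_cum_eq_card_filter_blockIndex (hdh : d = cum h M) (hdw : d = cum w M)
    (σ : Fin d → Fin d) (i j : ℕ) :
    #{r : Fin d | cum h i ≤ r.val ∧ r.val < cum h (i + 1) ∧
        cum w j ≤ (σ r).val ∧ (σ r).val < cum w (j + 1)} =
      #{r : Fin d | blockIndex h r = i ∧ blockIndex w (σ r) = j} := by
  congr 1
  refine filter_congr fun r _ => ?_
  rw [blockIndex_eq_iff (r.2.trans_eq hdh), blockIndex_eq_iff ((σ r).2.trans_eq hdw), and_assoc]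

lemma card_filter_blockIndex_eq_of_forall_lt {N : ℕ → ℕ → ℕ} (hdh : d = cum h M)
    (hdw : d = cum w M) {σ τ : Fin d → Fin d}
    (hσ : ∀ i < M, ∀ j < M, #{r : Fin d | blockIndex h r = i ∧ blockIndex w (σ r) = j} = N i j)
    (hτ : ∀ i < M, ∀ j < M, #{r : Fin d | blockIndex h r = i ∧ blockIndex w (τ r) = j} = N i j)
    (i j : ℕ) : #{r : Fin d | blockIndex h r = i ∧ blockIndex w (τ r) = j} =
      #{r : Fin d | blockIndex h r = i ∧ blockIndex w (σ r) = j} := by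
  by_cases hij : i < M ∧ j < M
  · rw [hσ i hij.1 j hij.2, hτ i hij.1 j hij.2]
  · have hempty : ∀ π : Fin d → Fin d,
        #{r : Fin d | blockIndex h r = i ∧ blockIndex w (π r) = j} = 0 := fun π => by
      rw [card_eq_zero, filter_eq_empty_iff]
      rintro r - ⟨rfl, rfl⟩
      exact hij ⟨blockIndex_lt (r.2.trans_eq hdh), blockIndex_lt ((π r).2.trans_eq hdw)⟩
    rw [hempty, hempty]

end FinBlocks

lemma cum_eq_cum_of_sums {m : ℕ} {N : ℕ → ℕ → ℕ} {h w : ℕ → ℕ}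
    (hh : ∀ i < m, h i = cum (N i) m) (hw : ∀ j < m, w j = cum (N · j) m) :
    cum h m = cum w m := by
  rw [cum, cum, sum_congr rfl fun i hi => hh i (mem_range.1 hi),
    sum_congr rfl fun j hj => hw j (mem_range.1 hj)]
  exact sum_comm

/-- The statement's block count at `(i + 1, j + 1)`, i.e. for the 0-indexed block `(i, j)`;
the truncation of `toNat` never bites, as the hypotheses make the difference nonnegative. -/
def secondDiff (b : ℕ → ℕ → ℤ) (i j : ℕ) : ℕ :=
  (b (i + 1) (j + 1) + b i j - b (i + 1) j - b i (j + 1)).toNat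

lemma secondDiff_transpose (b : ℕ → ℕ → ℤ) (i j : ℕ) :
    secondDiff (fun i j => b j i) j i = secondDiff b i j := by
  unfold secondDiff
  congr 1
  ring

section secondDiff

variable {b : ℕ → ℕ → ℤ} {m : ℕ}

lemma eq_cum_secondDiff {h : ℕ → ℕ} (hb0 : ∀ i, b i 0 = 0) (hbm : ∀ i ≤ m, b i m = cum h i)
    (hpos : ∀ i < m, ∀ j < m, 0 ≤ b (i + 1) (j + 1) + b i j - b (i + 1) j - b i (j + 1)) :
    ∀ i < m, h i = cum (secondDiff b i) m := by
  intro i hi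
  have hsum : ∑ j ∈ range m, (secondDiff b i j : ℤ) =
      ∑ j ∈ range m, ((b (i + 1) (j + 1) - b i (j + 1)) - (b (i + 1) j - b i j)) :=
    sum_congr rfl fun j hj => by
      rw [secondDiff, Int.toNat_of_nonneg (hpos i hi j (mem_range.1 hj))]; ring
  rw [sum_range_sub (fun j => b (i + 1) j - b i j), hbm (i + 1) hi, hbm i hi.le, hb0, hb0,
    cum_succ] at hsum
  rw [cum, ← Nat.cast_inj (R := ℤ), Nat.cast_sum, hsum]
  push_cast
  ring

lemma card_filter_cum_eq_iff {d : ℕ} {h w : ℕ → ℕ} (hdh : d = cum h m) (hdw : d = cum w m)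
    (hpos : ∀ i < m, ∀ j < m, 0 ≤ b (i + 1) (j + 1) + b i j - b (i + 1) j - b i (j + 1))
    (σ : Fin d → Fin d) :
    (∀ i j, 1 ≤ i → i ≤ m → 1 ≤ j → j ≤ m →
      (#{r : Fin d | cum h (i - 1) ≤ r.val ∧ r.val < cum h i ∧
          cum w (j - 1) ≤ (σ r).val ∧ (σ r).val < cum w j} : ℤ) =
        b i j + b (i - 1) (j - 1) - b i (j - 1) - b (i - 1) j) ↔
      ∀ i < m, ∀ j < m, #{r : Fin d | blockIndex h r = i ∧ blockIndex w (σ r) = j} =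
        secondDiff b i j := by
  have hcast : ∀ i < m, ∀ j < m,
      (secondDiff b i j : ℤ) = b (i + 1) (j + 1) + b i j - b (i + 1) j - b i (j + 1) :=
    fun i hi j hj => Int.toNat_of_nonneg (hpos i hi j hj)
  constructor
  · intro H i hi j hj
    have := H (i + 1) (j + 1) (by omega) hi (by omega) hj
    simp only [Nat.add_sub_cancel, card_filter_cum_eq_card_filter_blockIndex hdh hdw] at this
    exact_mod_cast this.trans (hcast i hi j hj).symm
  · intro H i j hi1 hi2 hj1 hj2
    obtain ⟨i, rfl⟩ := Nat.exists_eq_add_one_of_ne_zero (by omega : i ≠ 0)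
    obtain ⟨j, rfl⟩ := Nat.exists_eq_add_one_of_ne_zero (by omega : j ≠ 0)
    simp only [Nat.add_sub_cancel]
    rw [card_filter_cum_eq_card_filter_blockIndex hdh hdw, H i (by omega) j (by omega)]
    exact hcast i (by omega) j (by omega)

end secondDiff

theorem stmt6_general (n : ℕ) (h w : ℕ → ℕ) (d : ℕ)
    (hd : d = cum h (2 * n + 1))
    (b : ℕ → ℕ → ℤ)
    (hb0r : ∀ j, b 0 j = 0) (hb0c : ∀ i, b i 0 = 0)
    (hrow : ∀ i, 1 ≤ i → i ≤ 2 * n + 1 → b i (2 * n + 1) = (cum h i : ℤ))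
    (hcol : ∀ j, 1 ≤ j → j ≤ 2 * n + 1 → b (2 * n + 1) j = (cum w j : ℤ))
    (hpos : ∀ i j, 1 ≤ i → i ≤ 2 * n + 1 → 1 ≤ j → j ≤ 2 * n + 1 →
      0 ≤ b i j + b (i - 1) (j - 1) - b i (j - 1) - b (i - 1) j) :
    ∃! σ : Equiv.Perm (Fin d),
      (∀ i j, 1 ≤ i → i ≤ 2 * n + 1 → 1 ≤ j → j ≤ 2 * n + 1 →
        ((Finset.univ.filter (fun r : Fin d =>
            cum h (i - 1) ≤ r.val ∧ r.val < cum h i ∧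
            cum w (j - 1) ≤ (σ r).val ∧ (σ r).val < cum w j)).card : ℤ)
          = b i j + b (i - 1) (j - 1) - b i (j - 1) - b (i - 1) j)
      ∧ (∀ (i : ℕ) (r r' : Fin d), i < 2 * n + 1 →
            cum h i ≤ r.val → r'.val < cum h (i + 1) → r < r' → σ r < σ r')
      ∧ (∀ (j : ℕ) (c c' : Fin d), j < 2 * n + 1 →
            cum w j ≤ c.val → c'.val < cum w (j + 1) → c < c' → σ.symm c < σ.symm c') := by
  set m := 2 * n + 1
  have hpos' : ∀ i < m, ∀ j < m, 0 ≤ b (i + 1) (j + 1) + b i j - b (i + 1) j - b i (j + 1) :=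
    fun i hi j hj => by simpa using hpos (i + 1) (j + 1) (by omega) hi (by omega) hj
  have hbh : ∀ i ≤ m, b i m = cum h i := fun i hi =>
    i.eq_zero_or_pos.elim (fun h0 => by simp [h0, hb0r, cum]) (hrow i · hi)
  have hbw : ∀ j ≤ m, b m j = cum w j := fun j hj =>
    j.eq_zero_or_pos.elim (fun h0 => by simp [h0, hb0c, cum]) (hcol j · hj)
  have hh : ∀ i < m, h i = cum (secondDiff b i) m := eq_cum_secondDiff hb0c hbh hpos'
  have hw : ∀ j < m, w j = cum (secondDiff b · j) m := fun j hj =>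
    (eq_cum_secondDiff (b := fun i j => b j i) hb0r hbw
      (fun j hj i hi => by linarith [hpos' i hi j hj]) j hj).trans
      (congrArg (cum · m) (funext fun i => secondDiff_transpose b i j))
  have hdw : d = cum w m := hd.trans (cum_eq_cum_of_sums hh hw)
  obtain ⟨σ, hσN, hσr, hσc⟩ := exists_perm_strictMonoOn_blocks hh hw hd
  refine ⟨σ, ⟨(card_filter_cum_eq_iff hd hdw hpos' σ).2 hσN,
    (strictMonoOn_blockIndex_iff hd).2 hσr, (strictMonoOn_blockIndex_iff hdw).2 hσc⟩, ?_⟩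
  rintro τ ⟨hτN, hτr, hτc⟩
  exact Equiv.Perm.eq_of_strictMonoOn_blocks (monotone_blockIndex hdw)
    ((strictMonoOn_blockIndex_iff hd).1 hτr) ((strictMonoOn_blockIndex_iff hdw).1 hτc) hσr hσc
    (card_filter_blockIndex_eq_of_forall_lt hd hdw hσN
      ((card_filter_cum_eq_iff hd hdw hpos' τ).1 hτN))

/-- existence and uniqueness of the Zelevinsky permutation: given a
`(2n+1) × (2n+1)` block structure (here with `m = 2n+1` blocks of row heights
`h 0, …, h (m-1)` and column widths `w 0, …, w (m-1)`) and a block rank matrix `b`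
coming from a quiver rank array — i.e. `b` records the ranks of the northwest block
submatrices, so the boundary values vanish, the values `b i m` and `b m j` are the
cumulative heights and widths, and the mixed second differences are nonnegative —
there is a unique permutation of `Fin d` (`d` the total size) such that
(1) the number of `1`s in block `(i,j)` equals `b i j + b (i-1) (j-1) - b i (j-1) - b (i-1) j`,
(2) within each block row the `1`s proceed from northwest to southeast, and
(3) within each block column the `1`s proceed from northwest to southeast. -/
theorem stmt6 (n : ℕ) (h w : ℕ → ℕ) (d : ℕ)
    (hd : d = cum h (2 * n + 1)) (hwid : d = cum w (2 * n + 1))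
    (b : ℕ → ℕ → ℤ)
    (hb0r : ∀ j, b 0 j = 0) (hb0c : ∀ i, b i 0 = 0)
    (hrow : ∀ i, 1 ≤ i → i ≤ 2 * n + 1 → b i (2 * n + 1) = (cum h i : ℤ))
    (hcol : ∀ j, 1 ≤ j → j ≤ 2 * n + 1 → b (2 * n + 1) j = (cum w j : ℤ))
    (hpos : ∀ i j, 1 ≤ i → i ≤ 2 * n + 1 → 1 ≤ j → j ≤ 2 * n + 1 →
      0 ≤ b i j + b (i - 1) (j - 1) - b i (j - 1) - b (i - 1) j) :
    ∃! σ : Equiv.Perm (Fin d),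
      (∀ i j, 1 ≤ i → i ≤ 2 * n + 1 → 1 ≤ j → j ≤ 2 * n + 1 →
        ((Finset.univ.filter (fun r : Fin d =>
            cum h (i - 1) ≤ r.val ∧ r.val < cum h i ∧
            cum w (j - 1) ≤ (σ r).val ∧ (σ r).val < cum w j)).card : ℤ)
          = b i j + b (i - 1) (j - 1) - b i (j - 1) - b (i - 1) j)
      ∧ (∀ (i : ℕ) (r r' : Fin d), i < 2 * n + 1 →
            cum h i ≤ r.val → r'.val < cum h (i + 1) → r < r' → σ r < σ r')
      ∧ (∀ (j : ℕ) (c c' : Fin d), j < 2 * n + 1 →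
            cum w j ≤ c.val → c'.val < cum w (j + 1) → c < c' → σ.symm c < σ.symm c') :=
  stmt6_general n h w d hd b hb0r hb0c hrow hcol hpos
end

section
/- The rank of the snake matrix computes a Hom space: for a bipartite type A quiver Q, a representation V with dimension vector d, and an interval J = [α_i, β_j], one has rank M_J(V) + dim Hom_Q(I_{[β_i, α_j]}, V) = Σ_k d(x_k) (summing over the x-vertices appearing as column blocks of M_J), where I_{[β_i, α_j]} is the interval indecomposable that is the cokernel of the projective presentation whose matrix is the snake of arrows from α_i to β_j. -/
/-!
Rank–nullity for the snake map restricted to the column blocks `⨁_k V_{x_k}`, which has the same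
range as the snake map. After twisting the blocks by alternating signs, a tuple `(m_{x_k})`
lies in its kernel exactly when `V_{α_i}` and `V_{β_j}` kill the extreme components and
`V_{β_k}(m_{x_k}) = V_{α_{k+1}}(m_{x_{k+1}})` at each interior vertex `y_k`. Setting `m_{y_k}` to
this common value gives a homomorphism `I_{[β_i, α_j]} → V`, and every homomorphism arises in this
way from its components at the `x`-vertices.
-/

open Module

/-- The head (an even vertex `y`) of the arrow `t` of the bipartite type `A` quiver with
vertices `0,…,2n` (`y_k` is vertex `2k`, `x_k` is vertex `2k-1`; arrow `t` joins vertices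
`t` and `t+1` and is oriented from the odd to the even vertex; the arrow `α_k` has index
`2k-2` and `β_k` has index `2k-1`). -/
def headV (n : ℕ) (t : Fin (2 * n)) : Fin (2 * n + 1) :=
  if Even t.val then ⟨t.val, by have := t.isLt; omega⟩
  else ⟨t.val + 1, by have := t.isLt; omega⟩

/-- The tail (an odd vertex `x`) of the arrow `t`. -/
def tailV (n : ℕ) (t : Fin (2 * n)) : Fin (2 * n + 1) :=
  if Even t.val then ⟨t.val + 1, by have := t.isLt; omega⟩
  else ⟨t.val, by have := t.isLt; omega⟩

/-- The snake map `M_J(V)` of a representation `V`, for the interval `J` of arrows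
`a ≤ t ≤ b`, padded by zeros to an endomorphism of `⨁_v V_v`. -/
noncomputable def snakeMap {K : Type*} [Field K] {n : ℕ}
    (M : Fin (2 * n + 1) → Type*) [∀ v, AddCommGroup (M v)] [∀ v, Module K (M v)]
    (f : ∀ t : Fin (2 * n), M (tailV n t) →ₗ[K] M (headV n t)) (a b : ℕ) :
    (∀ v, M v) →ₗ[K] (∀ v, M v) :=
  ∑ t ∈ Finset.univ.filter (fun t : Fin (2 * n) => a ≤ t.val ∧ t.val ≤ b),
    (LinearMap.single K M (headV n t)).comp ((f t).comp (LinearMap.proj (tailV n t)))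

/-- The space `Hom_Q(I_{[β_i, α_j]}, V)` of homomorphisms from the interval
indecomposable `I_{[β_i, α_j]}` (supported on the vertices `2i-1 ≤ v ≤ 2j-1`, with
identity maps over the arrows `2i-1 ≤ t ≤ 2j-2` of the interval) to the representation
`V = (M, f)`: a homomorphism is a tuple `m = (m_v)` with `m_v = 0` outside of the
support, satisfying the commutation relations `f_t(m_{t(t)}) = m_{h(t)}` over arrows of
the interval and `f_t(m_{t(t)}) = 0` over the remaining arrows. -/
noncomputable def homInterval {K : Type*} [Field K] {n : ℕ}
    (M : Fin (2 * n + 1) → Type*) [∀ v, AddCommGroup (M v)] [∀ v, Module K (M v)]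
    (f : ∀ t : Fin (2 * n), M (tailV n t) →ₗ[K] M (headV n t)) (i j : ℕ) :
    Submodule K (∀ v, M v) :=
  LinearMap.ker (LinearMap.prod
    (LinearMap.pi (fun v : Fin (2 * n + 1) =>
      if 2 * i ≤ v.val + 1 ∧ v.val + 1 ≤ 2 * j then (0 : (∀ v, M v) →ₗ[K] M v)
      else LinearMap.proj v))
    (LinearMap.pi (fun t : Fin (2 * n) =>
      (f t).comp (LinearMap.proj (tailV n t)) -
        (if 2 * i ≤ t.val + 1 ∧ t.val + 2 ≤ 2 * j
         then LinearMap.proj (headV n t) else 0))))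

namespace SnakeMatrix

section PiFinset

variable {R ι : Type*} [Semiring R] (M : ι → Type*) [∀ i, AddCommMonoid (M i)]
  [∀ i, Module R (M i)] (s : Finset ι)

def piRestrict : (∀ i, M i) →ₗ[R] ∀ i : s, M i :=
  LinearMap.pi fun i => LinearMap.proj (i : ι)

@[simp] lemma piRestrict_apply (u : ∀ i, M i) (i : s) : piRestrict (R := R) M s u i = u i := rfl

variable [DecidableEq ι]

noncomputable def piExtendByZero : (∀ i : s, M i) →ₗ[R] ∀ i, M i :=
  LinearMap.pi fun i => if h : i ∈ s then LinearMap.proj (⟨i, h⟩ : s) else 0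

lemma piExtendByZero_apply (d : ∀ i : s, M i) (i : ι) :
    piExtendByZero (R := R) M s d i = if h : i ∈ s then d ⟨i, h⟩ else 0 := by
  simp only [piExtendByZero, LinearMap.pi_apply]; split_ifs <;> rfl

end PiFinset

variable {n : ℕ}

lemma val_headV (t : Fin (2 * n)) :
    ((headV n t : Fin (2 * n + 1)) : ℕ) = 2 * (((t : ℕ) + 1) / 2) := by
  unfold headV; split_ifs with h <;> rw [Nat.even_iff] at h <;> simp only <;> omega

lemma val_tailV (t : Fin (2 * n)) :
    ((tailV n t : Fin (2 * n + 1)) : ℕ) = 2 * ((t : ℕ) / 2) + 1 := by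
  unfold tailV; split_ifs with h <;> rw [Nat.even_iff] at h <;> simp only <;> omega

lemma headV_eq_headV_iff {s t : Fin (2 * n)} :
    headV n s = headV n t ↔ ((s : ℕ) + 1) / 2 = ((t : ℕ) + 1) / 2 := by
  rw [Fin.ext_iff, val_headV, val_headV]; omega

variable {K : Type*} [Field K] (M : Fin (2 * n + 1) → Type*) [∀ v, AddCommGroup (M v)]
  [∀ v, Module K (M v)] (f : ∀ t : Fin (2 * n), M (tailV n t) →ₗ[K] M (headV n t))

noncomputable def arrowSum (S : Finset (Fin (2 * n))) : (∀ v, M v) →ₗ[K] (∀ v, M v) :=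
  ∑ t ∈ S, (LinearMap.single K M (headV n t)).comp ((f t).comp (LinearMap.proj (tailV n t)))

lemma snakeMap_eq_arrowSum (a b : ℕ) :
    snakeMap M f a b = arrowSum M f {t | a ≤ (t : ℕ) ∧ (t : ℕ) ≤ b} := rfl

lemma arrowSum_apply (S : Finset (Fin (2 * n))) (u : ∀ v, M v) :
    arrowSum M f S u = ∑ t ∈ S, Pi.single (headV n t) (f t (u (tailV n t))) := by
  simp [arrowSum]

lemma arrowSum_apply_eq_zero {S : Finset (Fin (2 * n))} (u : ∀ v, M v) {y : Fin (2 * n + 1)}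
    (hy : ∀ t ∈ S, headV n t ≠ y) : arrowSum M f S u y = 0 := by
  rw [arrowSum_apply, Finset.sum_apply]
  exact Finset.sum_eq_zero fun t ht => Pi.single_eq_of_ne' (hy t ht) _

lemma arrowSum_apply_of_unique {S : Finset (Fin (2 * n))} (u : ∀ v, M v) {y : Fin (2 * n + 1)}
    {t₀ : Fin (2 * n)} (ht₀ : t₀ ∈ S) (hy : ∀ t ∈ S, t ≠ t₀ → headV n t ≠ y) :
    arrowSum M f S u y = Pi.single (headV n t₀) (f t₀ (u (tailV n t₀))) y := by
  rw [arrowSum_apply, Finset.sum_apply]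
  exact Finset.sum_eq_single_of_mem t₀ ht₀ fun t ht hne => Pi.single_eq_of_ne' (hy t ht hne) _

lemma arrowSum_apply_of_pair {S : Finset (Fin (2 * n))} (u : ∀ v, M v) {y : Fin (2 * n + 1)}
    {t₀ t₁ : Fin (2 * n)} (ht₀ : t₀ ∈ S) (ht₁ : t₁ ∈ S) (hne : t₀ ≠ t₁)
    (hy : ∀ t ∈ S, t ≠ t₀ → t ≠ t₁ → headV n t ≠ y) :
    arrowSum M f S u y = Pi.single (headV n t₀) (f t₀ (u (tailV n t₀))) y
      + Pi.single (headV n t₁) (f t₁ (u (tailV n t₁))) y := by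
  rw [arrowSum_apply, Finset.sum_apply]
  exact Finset.sum_eq_add_of_mem t₀ t₁ ht₀ ht₁ hne fun t ht ht' =>
    Pi.single_eq_of_ne' (hy t ht ht'.1 ht'.2) _

lemma arrowSum_congr (S : Finset (Fin (2 * n))) {u w : ∀ v, M v}
    (h : ∀ t ∈ S, u (tailV n t) = w (tailV n t)) : arrowSum M f S u = arrowSum M f S w := by
  simp only [arrowSum_apply]
  exact Finset.sum_congr rfl fun t ht => by rw [h t ht]

lemma mem_homInterval_iff {i j : ℕ} {m : ∀ v, M v} :
    m ∈ homInterval M f i j ↔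
      (∀ v : Fin (2 * n + 1),
        ¬ (2 * i ≤ (v : ℕ) + 1 ∧ (v : ℕ) + 1 ≤ 2 * j) → m v = 0) ∧
      ∀ t : Fin (2 * n), f t (m (tailV n t)) =
        if 2 * i ≤ (t : ℕ) + 1 ∧ (t : ℕ) + 2 ≤ 2 * j then m (headV n t) else 0 := by
  simp only [homInterval, LinearMap.mem_ker, LinearMap.prod_apply, Function.prod,
    Prod.mk_eq_zero, funext_iff, LinearMap.pi_apply, Pi.zero_apply, LinearMap.sub_apply,
    LinearMap.comp_apply, LinearMap.proj_apply, sub_eq_zero]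
  refine and_congr (forall_congr' fun v => ?_) (forall_congr' fun t => ?_) <;>
    split_ifs <;> simp only [LinearMap.zero_apply, LinearMap.proj_apply] <;> tauto

-- `x_k = 2k-1` gets the sign `(-1)^(k-1)`: the two tails `x_k`, `x_{k+1}` of arrows into `y_k`
-- have opposite signs.
noncomputable def altSign : (∀ v, M v) →ₗ[K] (∀ v, M v) :=
  LinearMap.pi fun v => ((-1 : K) ^ ((v : ℕ) / 2)) • LinearMap.proj v

lemma altSign_apply (u : ∀ v, M v) (v : Fin (2 * n + 1)) :
    altSign (K := K) M u v = ((-1 : K) ^ ((v : ℕ) / 2)) • u v := rfl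

lemma altSign_altSign (u : ∀ v, M v) : altSign (K := K) M (altSign (K := K) M u) = u := by
  ext v
  rw [altSign_apply, altSign_apply, smul_smul, ← pow_add, Even.neg_one_pow ⟨_, rfl⟩, one_smul]

lemma neg_one_pow_add_neg_one_pow_eq_zero {R : Type*} [Ring R] {a b : ℕ}
    (h : a + 1 = b ∨ b + 1 = a) : (-1 : R) ^ a + (-1) ^ b = 0 := by
  rcases h with rfl | rfl <;> simp [pow_succ]

lemma snakeMap_altSign_eq_zero_of_mem_homInterval {i j : ℕ} (hi : 1 ≤ i) (hj : j ≤ n)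
    {m : ∀ v, M v} (hm : m ∈ homInterval M f i j) :
    snakeMap M f (2 * i - 2) (2 * j - 1) (altSign (K := K) M m) = 0 := by
  obtain ⟨-, hcomm⟩ := (mem_homInterval_iff M f).1 hm
  set δ : Fin (2 * n + 1) → ∀ v, M v := fun y => Pi.single y (m y)
  have hterm : ∀ t, Pi.single (headV n t) (f t (altSign (K := K) M m (tailV n t))) =
      if 2 * i ≤ (t : ℕ) + 1 ∧ (t : ℕ) + 2 ≤ 2 * j then
        ((-1 : K) ^ ((t : ℕ) / 2)) • δ (headV n t)
      else 0 := by
    intro t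
    rw [altSign_apply, map_smul, hcomm t, val_tailV,
      show (2 * ((t : ℕ) / 2) + 1) / 2 = t / 2 by omega]
    split_ifs <;> simp [δ, Pi.single_smul]
  rw [snakeMap_eq_arrowSum, arrowSum_apply, Finset.sum_congr rfl fun t _ => hterm t,
    ← Finset.sum_filter]
  -- `t ↦ 4⌈t/2⌉ - 1 - t` swaps the interior arrows `2k-1` and `2k`: they share the
  -- head `y_k`, and their tails `x_k`, `x_{k+1}` carry opposite signs.
  refine Finset.sum_involution (fun t ht => ⟨4 * (((t : ℕ) + 1) / 2) - 1 - t, ?_⟩)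
    (fun t ht => ?_) (fun t ht _ => ?_) (fun t ht => ?_) (fun t ht => ?_) <;>
    simp only [Finset.mem_filter, Finset.mem_univ, true_and] at ht
  · omega
  · have hhead : headV n ⟨4 * (((t : ℕ) + 1) / 2) - 1 - t, by omega⟩ = headV n t :=
      headV_eq_headV_iff.2 (by simp only; omega)
    rw [hhead, ← add_smul, neg_one_pow_add_neg_one_pow_eq_zero (by simp only; omega), zero_smul]
  · simp only [ne_eq, Fin.ext_iff]; omega
  · simp only [Finset.mem_filter, Finset.mem_univ, true_and]; omega
  · ext; simp only; omega

def xVertices (n i j : ℕ) : Finset (Fin (2 * n + 1)) :=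
  Finset.univ.filter fun v : Fin (2 * n + 1) =>
    ¬ Even v.val ∧ 2 * i - 2 ≤ v.val ∧ v.val ≤ 2 * j

lemma mem_xVertices_iff {i j : ℕ} {v : Fin (2 * n + 1)} :
    v ∈ xVertices n i j ↔
      (v : ℕ) % 2 = 1 ∧ 2 * i - 2 ≤ (v : ℕ) ∧ (v : ℕ) ≤ 2 * j := by
  simp [xVertices, Nat.odd_iff]

-- The arrows `β_k = 2k-1` with `i ≤ k < j`, whose heads are the interior vertices `y_k` of the
-- support of `I_{[β_i, α_j]}`.
def betaArrows (n i j : ℕ) : Finset (Fin (2 * n)) :=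
  {t | (t : ℕ) % 2 = 1 ∧ 2 * i ≤ (t : ℕ) + 1 ∧ (t : ℕ) + 3 ≤ 2 * j}

noncomputable def betaExtension (i j : ℕ) : (∀ v, M v) →ₗ[K] (∀ v, M v) :=
  arrowSum M f (betaArrows n i j)

lemma eq_of_neg_one_pow_smul_add_eq_zero {V : Type*} [AddCommGroup V] [Module K V] {a b : ℕ}
    (hab : a = b + 1) {x y : V} (h : (-1 : K) ^ a • x + (-1 : K) ^ b • y = 0) : x = y := by
  rw [hab, pow_succ, mul_neg_one, neg_smul, neg_add_eq_zero] at h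
  exact (smul_right_injective V (pow_ne_zero b (neg_ne_zero.2 one_ne_zero))) h

lemma betaExtension_apply_eq_zero {i j : ℕ} (u : ∀ v, M v) {v : Fin (2 * n + 1)}
    (hv : ¬ ((v : ℕ) % 2 = 0 ∧ 2 * i ≤ (v : ℕ) ∧ (v : ℕ) + 2 ≤ 2 * j)) :
    betaExtension M f i j u v = 0 :=
  arrowSum_apply_eq_zero M f u fun t ht h => hv (by
    subst h; simp only [betaArrows, Finset.mem_filter_univ] at ht
    rw [val_headV]; omega)

lemma betaExtension_apply_of_mem {i j : ℕ} (u : ∀ v, M v) {t : Fin (2 * n)}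
    (ht : t ∈ betaArrows n i j) {y : Fin (2 * n + 1)} (hy : headV n t = y) :
    betaExtension M f i j u y = Pi.single (headV n t) (f t (u (tailV n t))) y :=
  arrowSum_apply_of_unique M f u ht fun s hs hne h => hne (Fin.ext (by
    simp only [betaArrows, Finset.mem_filter_univ] at ht hs
    rw [← hy, headV_eq_headV_iff] at h; omega))

lemma apply_tailV_eq_zero_of_snakeMap_altSign_eq_zero {a b : ℕ} {u : ∀ v, M v}
    (hker : snakeMap M f a b (altSign (K := K) M u) = 0) {t : Fin (2 * n)}
    (ht : a ≤ (t : ℕ) ∧ (t : ℕ) ≤ b)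
    (hunique : ∀ s : Fin (2 * n),
      a ≤ (s : ℕ) ∧ (s : ℕ) ≤ b → headV n s = headV n t → s = t) :
    f t (u (tailV n t)) = 0 := by
  have h := congrFun hker (headV n t)
  rw [snakeMap_eq_arrowSum, arrowSum_apply_of_unique M f _ (t₀ := t)
      ((Finset.mem_filter_univ t).2 ht)
      fun s hs hne h => hne (hunique s ((Finset.mem_filter_univ s).1 hs) h),
    Pi.single_eq_same, altSign_apply, map_smul, Pi.zero_apply, smul_eq_zero] at h
  exact h.resolve_left (pow_ne_zero _ (neg_ne_zero.2 one_ne_zero))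

lemma apply_tailV_eq_of_snakeMap_altSign_eq_zero {a b : ℕ} {u : ∀ v, M v}
    (hker : snakeMap M f a b (altSign (K := K) M u) = 0) {s t : Fin (2 * n)}
    (hst : (s : ℕ) + 1 = t) (ht : (t : ℕ) % 2 = 0) (hab : a ≤ (s : ℕ) ∧ (t : ℕ) ≤ b) :
    f t (u (tailV n t)) = Pi.single (headV n s) (f s (u (tailV n s))) (headV n t) := by
  have h := congrFun hker (headV n t)
  rw [snakeMap_eq_arrowSum, arrowSum_apply_of_pair M f _ (t₀ := t) (t₁ := s)
      ((Finset.mem_filter_univ t).2 (by omega)) ((Finset.mem_filter_univ s).2 (by omega))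
      (fun h => by rw [h] at hst; omega)
      fun r _ hne hne' h => hne' (Fin.ext (by rw [headV_eq_headV_iff] at h; omega)),
    Pi.single_eq_same, altSign_apply, altSign_apply, map_smul, map_smul, Pi.single_smul,
    Pi.smul_apply, val_tailV, val_tailV, Pi.zero_apply] at h
  exact eq_of_neg_one_pow_smul_add_eq_zero (by omega) h

lemma add_betaExtension_mem_homInterval {i j : ℕ} (hi : 1 ≤ i) {u : ∀ v, M v}
    (hu : ∀ v ∉ xVertices n i j, u v = 0)
    (hker : snakeMap M f (2 * i - 2) (2 * j - 1) (altSign (K := K) M u) = 0) :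
    u + betaExtension M f i j u ∈ homInterval M f i j := by
  have hu' : ∀ v : Fin (2 * n + 1),
      ¬ ((v : ℕ) % 2 = 1 ∧ 2 * i ≤ (v : ℕ) + 1 ∧ (v : ℕ) + 1 ≤ 2 * j) → u v = 0 :=
    fun v hv => hu v (by rw [mem_xVertices_iff]; omega)
  rw [mem_homInterval_iff]
  refine ⟨fun v hv => ?_, fun t => ?_⟩
  · rw [Pi.add_apply, hu' v (by omega), betaExtension_apply_eq_zero M f u (by omega), add_zero]
  rw [Pi.add_apply, betaExtension_apply_eq_zero M f u (by rw [val_tailV]; omega), add_zero]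
  by_cases hint : 2 * i ≤ (t : ℕ) + 1 ∧ (t : ℕ) + 2 ≤ 2 * j
  · rw [if_pos hint, Pi.add_apply, hu' (headV n t) (by rw [val_headV]; omega), zero_add]
    rcases Nat.mod_two_eq_zero_or_one t with ht | ht
    · obtain ⟨s, hst⟩ : ∃ s : Fin (2 * n), (s : ℕ) + 1 = t :=
        ⟨⟨t - 1, by omega⟩, by simp only; omega⟩
      rw [betaExtension_apply_of_mem M f u ((Finset.mem_filter_univ s).2 (by omega))
        (headV_eq_headV_iff.2 (by omega))]
      exact apply_tailV_eq_of_snakeMap_altSign_eq_zero M f hker hst ht (by omega)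
    · rw [betaExtension_apply_of_mem M f u ((Finset.mem_filter_univ t).2 (by omega)) rfl,
        Pi.single_eq_same]
  · rw [if_neg hint]
    by_cases hJ : 2 * i - 2 ≤ (t : ℕ) ∧ (t : ℕ) ≤ 2 * j - 1
    · exact apply_tailV_eq_zero_of_snakeMap_altSign_eq_zero M f hker hJ fun s hs h =>
        Fin.ext (by rw [headV_eq_headV_iff] at h; omega)
    · rw [hu' (tailV n t) (by rw [val_tailV]; omega), map_zero]

noncomputable def signedSnake (i j : ℕ) : (∀ v : xVertices n i j, M v) →ₗ[K] ∀ v, M v :=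
  snakeMap M f (2 * i - 2) (2 * j - 1) ∘ₗ altSign M ∘ₗ piExtendByZero M (xVertices n i j)

lemma snakeMap_congr_of_eqOn_xVertices {i j : ℕ} (hj : 1 ≤ j) {u w : ∀ v, M v}
    (h : ∀ v ∈ xVertices n i j, u v = w v) :
    snakeMap M f (2 * i - 2) (2 * j - 1) u = snakeMap M f (2 * i - 2) (2 * j - 1) w := by
  refine arrowSum_congr M f _ fun t ht => h _ ?_
  simp only [Finset.mem_filter_univ] at ht
  rw [mem_xVertices_iff, val_tailV]; omega

lemma range_signedSnake {i j : ℕ} (hj : 1 ≤ j) :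
    LinearMap.range (signedSnake M f i j) =
      LinearMap.range (snakeMap M f (2 * i - 2) (2 * j - 1)) := by
  refine le_antisymm (LinearMap.range_comp_le_range _ _) ?_
  rintro _ ⟨u, rfl⟩
  refine ⟨piRestrict (R := K) M _ (altSign (K := K) M u),
    snakeMap_congr_of_eqOn_xVertices M f hj fun v hv => ?_⟩
  rw [LinearMap.comp_apply, altSign_apply, piExtendByZero_apply, dif_pos hv, piRestrict_apply]
  exact congrFun (altSign_altSign M u) v

lemma eq_zero_of_mem_homInterval {i j : ℕ} (hi : 1 ≤ i) {m : ∀ v, M v}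
    (hm : m ∈ homInterval M f i j) (h : ∀ v ∈ xVertices n i j, m v = 0) : m = 0 := by
  obtain ⟨hsupp, hcomm⟩ := (mem_homInterval_iff M f).1 hm
  funext v
  by_cases hv : 2 * i ≤ (v : ℕ) + 1 ∧ (v : ℕ) + 1 ≤ 2 * j
  · rcases Nat.mod_two_eq_zero_or_one v with hp | hp
    · obtain ⟨t, rfl⟩ : ∃ t : Fin (2 * n), headV n t = v :=
        ⟨⟨v - 1, by omega⟩, Fin.ext (by rw [val_headV]; simp only; omega)⟩
      rw [val_headV] at hv
      have := hcomm t
      rw [h _ (by rw [mem_xVertices_iff, val_tailV]; omega), map_zero, if_pos (by omega)] at this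
      exact this.symm
    · exact h v (by rw [mem_xVertices_iff]; omega)
  · exact hsupp v hv

lemma piRestrict_mem_ker_signedSnake {i j : ℕ} (hi : 1 ≤ i) (hij : i ≤ j) (hj : j ≤ n)
    {m : ∀ v, M v} (hm : m ∈ homInterval M f i j) :
    piRestrict (R := K) M (xVertices n i j) m ∈ LinearMap.ker (signedSnake M f i j) := by
  rw [LinearMap.mem_ker, signedSnake, LinearMap.comp_apply, LinearMap.comp_apply,
    ← snakeMap_altSign_eq_zero_of_mem_homInterval M f hi hj hm]
  refine snakeMap_congr_of_eqOn_xVertices M f (hi.trans hij) fun v hv => ?_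
  rw [altSign_apply, altSign_apply, piExtendByZero_apply, dif_pos hv, piRestrict_apply]

noncomputable def homIntervalEquivKer {i j : ℕ} (hi : 1 ≤ i) (hij : i ≤ j) (hj : j ≤ n) :
    homInterval M f i j ≃ₗ[K] LinearMap.ker (signedSnake M f i j) := by
  refine LinearEquiv.ofBijective
    (((piRestrict (R := K) M _).comp (homInterval M f i j).subtype).codRestrict _
      fun m => piRestrict_mem_ker_signedSnake M f hi hij hj m.2) ⟨?_, ?_⟩
  · refine (injective_iff_map_eq_zero _).2 fun m hm => Subtype.ext ?_
    refine eq_zero_of_mem_homInterval M f hi m.2 fun v hv => ?_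
    exact congrFun (congrArg Subtype.val hm) ⟨v, hv⟩
  · rintro ⟨d, hd⟩
    set u := piExtendByZero (R := K) M (xVertices n i j) d
    refine ⟨⟨u + betaExtension M f i j u,
      add_betaExtension_mem_homInterval M f hi ?_ hd⟩, ?_⟩
    · intro v hv; simp [u, piExtendByZero_apply, hv]
    · ext v
      change (u + betaExtension M f i j u) v = d v
      rw [Pi.add_apply,
        betaExtension_apply_eq_zero M f u (by have := (mem_xVertices_iff.1 v.2).1; omega),
        add_zero]
      exact (piExtendByZero_apply M _ d v).trans (dif_pos v.2)

end SnakeMatrix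

/-- the rank of the snake matrix computes a Hom space.  For a
representation `V` of the bipartite type `A` quiver and the interval
`J = [α_i, β_j]` (arrows `2i-2, …, 2j-1`),
`rank M_J(V) + dim Hom_Q(I_{[β_i, α_j]}, V) = Σ_k dim V_{x_k}`, the sum being over the
`x`-vertices (the odd vertices in the vertex span `[2i-2, 2j]` of `J`), i.e. over the
column blocks of `M_J`. -/
theorem stmt17 {K : Type*} [Field K] {n : ℕ} (i j : ℕ)
    (hi : 1 ≤ i) (hij : i ≤ j) (hj : j ≤ n)
    (M : Fin (2 * n + 1) → Type*)
    [∀ v, AddCommGroup (M v)] [∀ v, Module K (M v)] [∀ v, FiniteDimensional K (M v)]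
    (f : ∀ t : Fin (2 * n), M (tailV n t) →ₗ[K] M (headV n t)) :
    finrank K (LinearMap.range (snakeMap M f (2 * i - 2) (2 * j - 1)))
        + finrank K (homInterval M f i j)
      = ∑ v ∈ Finset.univ.filter (fun v : Fin (2 * n + 1) =>
            ¬ Even v.val ∧ 2 * i - 2 ≤ v.val ∧ v.val ≤ 2 * j),
          finrank K (M v) := by
  have h := LinearMap.finrank_range_add_finrank_ker (SnakeMatrix.signedSnake M f i j)
  rw [SnakeMatrix.range_signedSnake M f (hi.trans hij), finrank_pi_fintype,
    Finset.sum_coe_sort (SnakeMatrix.xVertices n i j) fun v => finrank K (M v)] at h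
  rwa [(SnakeMatrix.homIntervalEquivKer M f hi hij hj).finrank_eq]
end
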